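/- Let $c_1, c_2 > 0$ and let $x_1 = \frac{\sqrt{c_2}}{\sqrt{c_1}+\sqrt{c_2}} \cdot \frac{1}{\sqrt{2\sqrt{c_1 c_2}}}$, $x_2 = \frac{\sqrt{c_1}}{\sqrt{c_1}+\sqrt{c_2}} \cdot \frac{1}{\sqrt{2\sqrt{c_1 c_2}}}$. Then $(4 c_1 c_2 x_1^2 - c_2) x_2 + (2 c_1^2 + 2 c_1 c_2) x_1^3 = 0$ and $(4 c_1^3 - 8 c_1^2 c_2 + 4 c_1 c_2^2) x_1^4 + 8 c_1 c_2 x_1^2 - c_2 = 0$. -/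

import Mathlib

/-!
Write `a = √c₁`, `b = √c₂` and `t = 1 / ((a + b) √(2ab))`, so that the equilibrium is
`(x₁, x₂) = (b t, a t)` and `2ab (a + b)² t² = 1`. In these coordinates each polynomial of `T₂`
is a multiple of `2ab (a + b)² t² - 1`, hence vanishes.
-/

section TriangularSet

variable {R : Type*} [CommRing R]

-- The two polynomials of the triangular set `T₂`.
def cournotT2Fst (c₁ c₂ x₁ x₂ : R) : R :=
  (4 * c₁ * c₂ * x₁ ^ 2 - c₂) * x₂ + (2 * c₁ ^ 2 + 2 * c₁ * c₂) * x₁ ^ 3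

def cournotT2Snd (c₁ c₂ x₁ : R) : R :=
  (4 * c₁ ^ 3 - 8 * c₁ ^ 2 * c₂ + 4 * c₁ * c₂ ^ 2) * x₁ ^ 4 + 8 * c₁ * c₂ * x₁ ^ 2 - c₂

theorem cournotT2Fst_eq_zero {a b c₁ c₂ t : R} (ha : a ^ 2 = c₁) (hb : b ^ 2 = c₂)
    (h : 2 * a * b * (a + b) ^ 2 * t ^ 2 = 1) : cournotT2Fst c₁ c₂ (b * t) (a * t) = 0 := by
  subst ha hb
  unfold cournotT2Fst
  linear_combination a * b ^ 2 * t * h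

theorem cournotT2Snd_eq_zero {a b c₁ c₂ t : R} (ha : a ^ 2 = c₁) (hb : b ^ 2 = c₂)
    (h : 2 * a * b * (a + b) ^ 2 * t ^ 2 = 1) : cournotT2Snd c₁ c₂ (b * t) = 0 := by
  subst ha hb
  unfold cournotT2Snd
  linear_combination (2 * a * b ^ 3 * (a - b) ^ 2 * t ^ 2 + b ^ 2) * h

end TriangularSet

theorem stmt4 (c1 c2 : ℝ) (hc1 : 0 < c1) (hc2 : 0 < c2)
    (x1 x2 : ℝ)
    (hx1 : x1 = Real.sqrt c2 / (Real.sqrt c1 + Real.sqrt c2) *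
      (1 / Real.sqrt (2 * Real.sqrt (c1 * c2))))
    (hx2 : x2 = Real.sqrt c1 / (Real.sqrt c1 + Real.sqrt c2) *
      (1 / Real.sqrt (2 * Real.sqrt (c1 * c2)))) :
    (4 * c1 * c2 * x1 ^ 2 - c2) * x2 + (2 * c1 ^ 2 + 2 * c1 * c2) * x1 ^ 3 = 0 ∧
    (4 * c1 ^ 3 - 8 * c1 ^ 2 * c2 + 4 * c1 * c2 ^ 2) * x1 ^ 4 + 8 * c1 * c2 * x1 ^ 2 - c2 = 0 := by
  have ha : √c1 ^ 2 = c1 := Real.sq_sqrt hc1.le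
  have hb : √c2 ^ 2 = c2 := Real.sq_sqrt hc2.le
  have hd : √(2 * √(c1 * c2)) ^ 2 = 2 * √c1 * √c2 := by
    rw [Real.sq_sqrt (by positivity), Real.sqrt_mul hc1.le, mul_assoc]
  set t := 1 / ((√c1 + √c2) * √(2 * √(c1 * c2))) with ht
  have hscale : 2 * √c1 * √c2 * (√c1 + √c2) ^ 2 * t ^ 2 = 1 := by
    have ha0 : 0 < √c1 := Real.sqrt_pos.mpr hc1
    have hb0 : 0 < √c2 := Real.sqrt_pos.mpr hc2
    simp only [t, div_pow, mul_pow, hd]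
    field_simp
  have hx1' : x1 = √c2 * t := by rw [hx1, ht, mul_one_div, mul_one_div, div_div]
  have hx2' : x2 = √c1 * t := by rw [hx2, ht, mul_one_div, mul_one_div, div_div]
  rw [hx1', hx2']
  exact ⟨cournotT2Fst_eq_zero ha hb hscale, cournotT2Snd_eq_zero ha hb hscale⟩
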